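/- arXiv:2009.02916 — 3 statements merged into one kernel-verified Lean document; each statement's English description precedes it below -/
import Mathlib

section
/- Let $n \ge 1$ and $w \in \mathbb{R}^n$. Define the $n \times n$ matrix $M(w)$ with entries $m_{i,j}(w) = 1$ if $i = j$, $m_{i,j}(w) = w_i$ if $i > j$, and $m_{i,j}(w) = -w_i$ if $i < j$. Then $\det M(w) = \sum_{S \subseteq \{1,\dots,n\},\ |S| \text{ even}} \prod_{j \in S} w_j$. -/
open Finset Matrix

/-- The matrix obtained from `M(w)` by column operations `C_j ← C_j - C_{j+1}`. -/
def Nmat (n : ℕ) (w : Fin (n+1) → ℝ) : Matrix (Fin (n+1)) (Fin (n+1)) ℝ :=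
  Matrix.of fun i j =>
    if j = Fin.last n then (if i = Fin.last n then 1 else -w i)
    else if i = j then 1 + w i
    else if (i : ℕ) = (j : ℕ) + 1 then w i - 1
    else 0

/-- The unit lower bidiagonal column-operation matrix. -/
def Emat (n : ℕ) : Matrix (Fin (n+1)) (Fin (n+1)) ℝ :=
  Matrix.of fun i j =>
    if i = j then 1 else if (i : ℕ) = (j : ℕ) + 1 then -1 else 0

lemma Emat_det (n : ℕ) : (Emat n).det = 1 := by
  have h : (Emat n).BlockTriangular OrderDual.toDual := by
    intro i j hij
    have hij' : (i : ℕ) < (j : ℕ) := hij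
    simp only [Emat, Matrix.of_apply]
    rw [if_neg (by intro h; subst h; omega), if_neg (by omega)]
  rw [Matrix.det_of_lowerTriangular _ h]
  simp [Emat]

lemma M_mul_E (n : ℕ) (w : Fin (n+1) → ℝ) :
    (Matrix.of fun i j : Fin (n+1) =>
        if i = j then (1 : ℝ) else if j < i then w i else -w i) * Emat n = Nmat n w := by
  ext i j
  rw [Matrix.mul_apply]
  refine Fin.lastCases ?_ ?_ j
  · have hE : ∀ k : Fin (n+1), Emat n k (Fin.last n) = if k = Fin.last n then 1 else 0 := by
      intro k
      simp only [Emat, Matrix.of_apply, Fin.val_last]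
      split_ifs with h1 h2 <;> first | rfl | (exfalso; omega)
    simp only [hE, mul_ite, mul_one, mul_zero, Finset.sum_ite_eq', Finset.mem_univ, if_pos]
    simp only [Matrix.of_apply, Nmat, if_pos rfl]
    have : ¬ Fin.last n < i := (Fin.le_last i).not_gt
    split_ifs <;> first | rfl | (exfalso; omega)
  · intro j
    have hE : ∀ k : Fin (n+1), Emat n k j.castSucc
        = (if k = j.castSucc then 1 else 0) + (if k = j.succ then -1 else 0) := by
      intro k
      simp only [Emat, Matrix.of_apply, Fin.ext_iff, Fin.coe_castSucc, Fin.val_succ]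
      split_ifs <;> first | ring1 | (exfalso; omega)
    have hsum : ∑ k, (Matrix.of fun i j : Fin (n+1) =>
          if i = j then (1 : ℝ) else if j < i then w i else -w i) i k * Emat n k j.castSucc
        = (Matrix.of fun i j : Fin (n+1) =>
          if i = j then (1 : ℝ) else if j < i then w i else -w i) i j.castSucc
          - (Matrix.of fun i j : Fin (n+1) =>
          if i = j then (1 : ℝ) else if j < i then w i else -w i) i j.succ := by
      simp only [hE, mul_add, Finset.sum_add_distrib, mul_ite, mul_one, mul_zero, mul_neg,
        Finset.sum_ite_eq', Finset.mem_univ, if_pos]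
      ring
    rw [hsum]
    have hne : j.castSucc ≠ Fin.last n := (Fin.castSucc_lt_last j).ne
    simp only [Matrix.of_apply, Nmat, if_neg hne]
    have hlast : (j : ℕ) < n := j.isLt
    simp only [ne_eq, Fin.ext_iff, Fin.lt_def, Fin.coe_castSucc, Fin.val_succ]
    split_ifs <;> first | ring1 | (exfalso; omega)


lemma Nmat_last_col (n : ℕ) (w : Fin (n+1) → ℝ) (i : Fin (n+1)) :
    Nmat n w i (Fin.last n) = if i = Fin.last n then 1 else -w i := by
  simp [Nmat]

lemma Nmat_other_col (n : ℕ) (w : Fin (n+1) → ℝ) (i j : Fin (n+1)) (hj : j ≠ Fin.last n) :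
    Nmat n w i j = if i = j then 1 + w i
      else if (i : ℕ) = (j : ℕ) + 1 then w i - 1 else 0 := by
  simp [Nmat, hj]

lemma Nmat_det (n : ℕ) (w : Fin (n+1) → ℝ) :
    (Nmat n w).det = ((∏ i, (1 + w i)) + (∏ i, (1 - w i))) / 2 := by
  induction n with
  | zero =>
      rw [Matrix.det_fin_one]
      have h0 : (0 : Fin 1) = Fin.last 0 := rfl
      rw [h0, Nmat_last_col, if_pos rfl]
      rw [Fin.prod_univ_one, Fin.prod_univ_one]
      ring
  | succ n ih =>
      have hlastval : ((Fin.last n).succ : Fin (n+2)) = Fin.last (n+1) := by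
        simp [Fin.ext_iff]
      have h0ne : (0 : Fin (n+2)) ≠ Fin.last (n+1) := by
        simp [Fin.ext_iff]
      rw [Matrix.det_succ_row_zero, Fin.sum_univ_succ]
      have hzero : ∀ j : Fin (n+1), j ∈ Finset.univ → j ≠ Fin.last n →
          (-1 : ℝ) ^ ((j.succ : Fin (n+2)) : ℕ) * Nmat (n+1) w 0 j.succ *
            ((Nmat (n+1) w).submatrix Fin.succ (j.succ).succAbove).det = 0 := by
        intro j _ hj
        have h1 : (j.succ : Fin (n+2)) ≠ Fin.last (n+1) := by
          simp only [ne_eq, Fin.ext_iff, Fin.val_succ, Fin.val_last] at hj ⊢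
          omega
        have h2 : (0 : Fin (n+2)) ≠ j.succ := by
          simp only [ne_eq, Fin.ext_iff, Fin.val_succ, Fin.val_zero]
          omega
        have hv : Nmat (n+1) w 0 j.succ = 0 := by
          rw [Nmat_other_col _ _ _ _ h1, if_neg h2, if_neg (by simp)]
        rw [hv]; ring
      rw [Finset.sum_eq_single (Fin.last n) hzero (by simp)]
      have h00 : Nmat (n+1) w 0 0 = 1 + w 0 := by
        rw [Nmat_other_col _ _ _ _ h0ne, if_pos rfl]
      have h0last : Nmat (n+1) w 0 ((Fin.last n).succ) = - w 0 := by
        rw [hlastval, Nmat_last_col, if_neg h0ne]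
      -- first minor is Nmat n (w ∘ Fin.succ)
      have hminor0 : (Nmat (n+1) w).submatrix Fin.succ ((0 : Fin (n+2)).succAbove)
          = Nmat n (w ∘ Fin.succ) := by
        rw [Fin.succAbove_zero]
        ext i j
        rw [Matrix.submatrix_apply]
        by_cases hj : j = Fin.last n
        · subst hj
          rw [hlastval, Nmat_last_col, Nmat_last_col]
          by_cases hi : i = Fin.last n
          · rw [if_pos hi, if_pos (by rw [hi, hlastval])]
          · rw [if_neg hi, if_neg (by
              simp only [ne_eq, Fin.ext_iff, Fin.val_succ, Fin.val_last] at hi ⊢; omega)]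
            rfl
        · have hj' : (j.succ : Fin (n+2)) ≠ Fin.last (n+1) := by
            simp only [ne_eq, Fin.ext_iff, Fin.val_succ, Fin.val_last] at hj ⊢; omega
          rw [Nmat_other_col _ _ _ _ hj', Nmat_other_col _ _ _ _ hj]
          have e3 : ((i.succ : Fin (n+2)) = j.succ) ↔ i = j := by
            simp [Fin.ext_iff]
          have e4 : (((i.succ : Fin (n+2)) : ℕ) = ((j.succ : Fin (n+2)) : ℕ) + 1)
              ↔ ((i : ℕ) = (j : ℕ) + 1) := by simp
          by_cases hij : i = j
          · rw [if_pos (e3.mpr hij), if_pos hij]; rfl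
          · rw [if_neg (fun h => hij (e3.mp h)), if_neg hij]
            by_cases hij2 : (i : ℕ) = (j : ℕ) + 1
            · rw [if_pos (e4.mpr hij2), if_pos hij2]; rfl
            · rw [if_neg (fun h => hij2 (e4.mp h)), if_neg hij2]
      -- second minor is upper triangular with diagonal w i.succ - 1
      have hminorlast : ((Nmat (n+1) w).submatrix Fin.succ ((Fin.last n).succ).succAbove).det
          = ∏ i : Fin (n+1), (w i.succ - 1) := by
        rw [hlastval, Fin.succAbove_last]
        have htri : ((Nmat (n+1) w).submatrix Fin.succ Fin.castSucc).BlockTriangular id := by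
          intro i j hij
          have hij' : (j : ℕ) < (i : ℕ) := hij
          have hne : (j.castSucc : Fin (n+2)) ≠ Fin.last (n+1) := by
            simp only [ne_eq, Fin.ext_iff, Fin.coe_castSucc, Fin.val_last]; omega
          rw [Matrix.submatrix_apply, Nmat_other_col _ _ _ _ hne,
            if_neg (by simp only [ne_eq, Fin.ext_iff, Fin.val_succ, Fin.coe_castSucc]; omega),
            if_neg (by simp only [Fin.val_succ, Fin.coe_castSucc]; omega)]
        rw [Matrix.det_of_upperTriangular htri]
        refine Finset.prod_congr rfl fun i _ => ?_
        have hne : (i.castSucc : Fin (n+2)) ≠ Fin.last (n+1) := by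
          simp only [ne_eq, Fin.ext_iff, Fin.coe_castSucc, Fin.val_last]; omega
        rw [Matrix.submatrix_apply, Nmat_other_col _ _ _ _ hne,
          if_neg (by simp only [ne_eq, Fin.ext_iff, Fin.val_succ, Fin.coe_castSucc]; omega),
          if_pos (by simp)]
      rw [h00, h0last, hminor0, hminorlast, ih]
      have hprodneg : (∏ i : Fin (n+1), (w i.succ - 1))
          = (-1 : ℝ) ^ (n+1) * ∏ i : Fin (n+1), (1 - w i.succ) := by
        have : ∀ i : Fin (n+1), w i.succ - 1 = (-1) * (1 - w i.succ) := fun i => by ring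
        rw [Finset.prod_congr rfl fun i _ => this i, Finset.prod_mul_distrib,
          Finset.prod_const, Finset.card_univ, Fintype.card_fin]
      rw [hprodneg]
      rw [Fin.prod_univ_succ (fun i => 1 + w i), Fin.prod_univ_succ (fun i => 1 - w i)]
      simp only [Function.comp_apply, Fin.val_zero, pow_zero, Fin.val_succ, Fin.val_last]
      have key : ((-1 : ℝ)) ^ (n+1) * ((-1 : ℝ)) ^ (n+1) = 1 := by
        rw [← pow_add]
        exact Even.neg_one_pow ⟨n+1, by ring⟩
      set P := ∏ i : Fin (n+1), (1 + w i.succ) with hP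
      set Q := ∏ i : Fin (n+1), (1 - w i.succ) with hQ
      linear_combination (-(w 0 * Q)) * key

lemma sum_even_subsets (n : ℕ) (w : Fin n → ℝ) :
    ∑ S ∈ Finset.univ.filter (fun S : Finset (Fin n) => Even S.card), ∏ j ∈ S, w j
      = ((∏ i, (1 + w i)) + (∏ i, (1 - w i))) / 2 := by
  have h1 : (∏ i, (1 + w i)) = ∑ S : Finset (Fin n), ∏ j ∈ S, w j := by
    have : ∀ i : Fin n, (1 : ℝ) + w i = w i + 1 := fun i => by ring
    rw [Finset.prod_congr rfl fun i _ => this i, Finset.prod_add]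
    simp [Finset.powerset_univ]
  have h2 : (∏ i, (1 - w i)) = ∑ S : Finset (Fin n), (-1 : ℝ) ^ S.card * ∏ j ∈ S, w j := by
    have : ∀ i : Fin n, (1 : ℝ) - w i = -w i + 1 := fun i => by ring
    rw [Finset.prod_congr rfl fun i _ => this i, Finset.prod_add]
    rw [Finset.powerset_univ]
    refine Finset.sum_congr rfl fun S _ => ?_
    rw [Finset.prod_const_one, mul_one]
    have hneg : ∀ i : Fin n, -w i = (-1 : ℝ) * w i := fun i => by ring
    rw [Finset.prod_congr rfl fun i _ => hneg i, Finset.prod_mul_distrib,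
      Finset.prod_const]
  rw [h1, h2, ← Finset.sum_add_distrib, Finset.sum_filter]
  rw [eq_div_iff (by norm_num : (2:ℝ) ≠ 0), Finset.sum_mul]
  refine Finset.sum_congr rfl fun S _ => ?_
  rcases Nat.even_or_odd S.card with h | h
  · rw [if_pos h, h.neg_one_pow]
    ring
  · rw [if_neg (Nat.not_even_iff_odd.mpr h), h.neg_one_pow]
    ring

/-- Determinant of the matrix `M(w)` with `1` on the diagonal, `w i` below and `-w i`
above the diagonal, equals the sum over even-cardinality subsets `S` of `{1,…,n}`
of the products `∏_{j ∈ S} w j`. -/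
theorem det_M_eq_sum_even_subsets (n : ℕ) (hn : 1 ≤ n) (w : Fin n → ℝ) :
    (Matrix.of fun i j : Fin n =>
        if i = j then (1 : ℝ) else if j < i then w i else -w i).det
      = ∑ S ∈ Finset.univ.filter (fun S : Finset (Fin n) => Even S.card),
          ∏ j ∈ S, w j := by
  obtain ⟨m, rfl⟩ : ∃ m, n = m + 1 := ⟨n - 1, by omega⟩
  calc (Matrix.of fun i j : Fin (m+1) =>
        if i = j then (1 : ℝ) else if j < i then w i else -w i).det
      = ((Matrix.of fun i j : Fin (m+1) =>
          if i = j then (1 : ℝ) else if j < i then w i else -w i) * Emat m).det := by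
        rw [Matrix.det_mul, Emat_det, mul_one]
    _ = (Nmat m w).det := by rw [M_mul_E]
    _ = ((∏ i, (1 + w i)) + (∏ i, (1 - w i))) / 2 := Nmat_det m w
    _ = _ := (sum_even_subsets (m+1) w).symm
end

section
/- Let $n \ge 1$, $\epsilon \in (0,1)$, and let $\Omega_\epsilon = \{ v \in \mathbb{R}^n : v_j \ge 0 \text{ for all } j, \ \sum_j v_j \le \epsilon \}$. For $v \in \Omega_\epsilon$ define $\hat v_j = \sum_{r=j+1}^n v_r - \sum_{r=1}^{j-1} v_r$ and $w_j = v_j/(1+\hat v_j)$. Then the map $v \mapsto w$ is injective on $\Omega_\epsilon$. -/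
open Finset

/-- `v̂ⱼ = ∑_{r>j} vᵣ - ∑_{r<j} vᵣ`. -/
noncomputable def hatv {n : ℕ} (v : Fin n → ℝ) (j : Fin n) : ℝ :=
  (∑ r ∈ Finset.univ.filter (fun r => j < r), v r)
    - ∑ r ∈ Finset.univ.filter (fun r => r < j), v r

/-- auxiliary: `c_k = 1 + S - 2 ∑_{r<k} v_r`. -/
noncomputable def ccGrushin {n : ℕ} (v : Fin n → ℝ) (k : ℕ) : ℝ :=
  1 + (∑ j, v j) - 2 * ∑ j ∈ Finset.univ.filter (fun j : Fin n => (j : ℕ) < k), v j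

lemma grushin_sum_split {n : ℕ} (v : Fin n → ℝ) (j : Fin n) :
    ∑ r, v r = (∑ r ∈ Finset.univ.filter (fun r => r < j), v r) + v j
      + ∑ r ∈ Finset.univ.filter (fun r => j < r), v r := by
  have h := Finset.sum_filter_add_sum_filter_not Finset.univ (fun r => r < j) v
  have h2 : Finset.univ.filter (fun r : Fin n => ¬ r < j)
      = insert j (Finset.univ.filter (fun r => j < r)) := by
    ext r
    simp only [Finset.mem_filter, Finset.mem_insert, Finset.mem_univ, true_and, not_lt]
    constructor
    · intro h
      rcases eq_or_lt_of_le h with h | h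
      · exact Or.inl h.symm
      · exact Or.inr h
    · rintro (rfl | h)
      · exact le_refl r
      · exact le_of_lt h
  rw [h2, Finset.sum_insert (by simp)] at h
  linarith [h]

lemma grushin_hatv_eq {n : ℕ} (v : Fin n → ℝ) (j : Fin n) :
    1 + hatv v j = ccGrushin v j - v j := by
  have hs := grushin_sum_split v j
  have hfe : Finset.univ.filter (fun r : Fin n => (r : ℕ) < (j : ℕ))
      = Finset.univ.filter (fun r : Fin n => r < j) := by
    ext r; simp only [Finset.mem_filter, Fin.lt_def]
  rw [hatv, ccGrushin, hfe]
  linarith [hs]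

lemma grushin_cc_succ {n : ℕ} (v : Fin n → ℝ) {k : ℕ} (hk : k < n) :
    ccGrushin v (k + 1) = ccGrushin v k - 2 * v ⟨k, hk⟩ := by
  have h2 : Finset.univ.filter (fun j : Fin n => (j : ℕ) < k + 1)
      = insert ⟨k, hk⟩ (Finset.univ.filter (fun j : Fin n => (j : ℕ) < k)) := by
    ext r
    simp [Nat.lt_succ_iff_lt_or_eq, Fin.ext_iff, or_comm]
    omega
  rw [ccGrushin, ccGrushin, h2, Finset.sum_insert (by simp)]
  ring

lemma grushin_cc_pos {n : ℕ} {ε : ℝ} (hε1 : ε < 1) {v : Fin n → ℝ}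
    (hv0 : ∀ j, 0 ≤ v j) (hvS : ∑ j, v j ≤ ε) (k : ℕ) : 0 < ccGrushin v k := by
  have hT : ∑ j ∈ Finset.univ.filter (fun j : Fin n => (j : ℕ) < k), v j ≤ ∑ j, v j :=
    Finset.sum_le_sum_of_subset_of_nonneg (Finset.filter_subset _ _)
      (fun i _ _ => hv0 i)
  rw [ccGrushin]; linarith

lemma grushin_d_pos {n : ℕ} {ε : ℝ} (hε1 : ε < 1) {v : Fin n → ℝ}
    (hv0 : ∀ j, 0 ≤ v j) (hvS : ∑ j, v j ≤ ε) (j : Fin n) : 0 < 1 + hatv v j := by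
  have h1 := grushin_cc_succ v j.isLt
  have h2 := grushin_cc_pos hε1 hv0 hvS ((j : ℕ) + 1)
  have h3 := grushin_hatv_eq v j
  have h4 : v ⟨(j : ℕ), j.isLt⟩ = v j := by congr 1
  rw [h4] at h1
  nlinarith [hv0 j]

lemma grushin_w_lt_one {n : ℕ} {ε : ℝ} (hε1 : ε < 1) {v : Fin n → ℝ}
    (hv0 : ∀ j, 0 ≤ v j) (hvS : ∑ j, v j ≤ ε) (j : Fin n) :
    v j / (1 + hatv v j) < 1 := by
  have hd := grushin_d_pos hε1 hv0 hvS j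
  rw [div_lt_one hd]
  have h1 := grushin_cc_succ v j.isLt
  have h2 := grushin_cc_pos hε1 hv0 hvS ((j : ℕ) + 1)
  have h3 := grushin_hatv_eq v j
  have h4 : v ⟨(j : ℕ), j.isLt⟩ = v j := by congr 1
  rw [h4] at h1
  linarith

lemma grushin_w_nonneg {n : ℕ} {ε : ℝ} (hε1 : ε < 1) {v : Fin n → ℝ}
    (hv0 : ∀ j, 0 ≤ v j) (hvS : ∑ j, v j ≤ ε) (j : Fin n) :
    0 ≤ v j / (1 + hatv v j) :=
  div_nonneg (hv0 j) (grushin_d_pos hε1 hv0 hvS j).le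

/-- recursion in terms of `w`. -/
lemma grushin_cc_succ' {n : ℕ} {ε : ℝ} (hε1 : ε < 1) {v : Fin n → ℝ}
    (hv0 : ∀ j, 0 ≤ v j) (hvS : ∑ j, v j ≤ ε) (j : Fin n) :
    ccGrushin v ((j : ℕ) + 1) = ccGrushin v (j : ℕ)
      * ((1 - v j / (1 + hatv v j)) / (1 + v j / (1 + hatv v j))) := by
  have hd := grushin_d_pos hε1 hv0 hvS j
  have hc := grushin_cc_pos hε1 hv0 hvS (j : ℕ)
  have h1 := grushin_cc_succ v j.isLt
  have h3 := grushin_hatv_eq v j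
  have h4 : v ⟨(j : ℕ), j.isLt⟩ = v j := by congr 1
  rw [h4] at h1
  have hcc : ccGrushin v (j : ℕ) = (1 + hatv v j) + v j := by linarith
  have h1w : (0:ℝ) < 1 + v j / (1 + hatv v j) := by
    have := grushin_w_nonneg hε1 hv0 hvS j; linarith
  rw [h1, ← mul_div_assoc, eq_div_iff (ne_of_gt h1w), hcc]
  field_simp
  ring

/-- product formula. -/
lemma grushin_cc_prod {n : ℕ} {ε : ℝ} (hε1 : ε < 1) {v : Fin n → ℝ}
    (hv0 : ∀ j, 0 ≤ v j) (hvS : ∑ j, v j ≤ ε) :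
    ∀ k, k ≤ n → ccGrushin v k = ccGrushin v 0
      * ∏ j ∈ Finset.univ.filter (fun j : Fin n => (j : ℕ) < k),
        ((1 - v j / (1 + hatv v j)) / (1 + v j / (1 + hatv v j))) := by
  intro k
  induction k with
  | zero => intro _; simp
  | succ k ih =>
    intro hk
    have hk' : k < n := hk
    have hfe : Finset.univ.filter (fun j : Fin n => (j : ℕ) < k + 1)
        = insert ⟨k, hk'⟩ (Finset.univ.filter (fun j : Fin n => (j : ℕ) < k)) := by
      ext r
      simp [Nat.lt_succ_iff_lt_or_eq, Fin.ext_iff, or_comm]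
      omega
    have h := grushin_cc_succ' hε1 hv0 hvS ⟨k, hk'⟩
    simp only [Fin.val_mk] at h
    rw [hfe, Finset.prod_insert (by simp), h, ih (le_of_lt hk')]
    ring

/-- The map `v ↦ w`, `wⱼ = vⱼ/(1 + v̂ⱼ)`, is injective on
`Ω_ε = {v : vⱼ ≥ 0 ∀ j, ∑ⱼ vⱼ ≤ ε}` for `ε ∈ (0,1)`. -/
theorem injOn_grushin_change_of_variables (n : ℕ) (hn : 1 ≤ n) (ε : ℝ)
    (hε : ε ∈ Set.Ioo (0 : ℝ) 1) :
    Set.InjOn (fun v : Fin n → ℝ => fun j : Fin n => v j / (1 + hatv v j))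
      {v : Fin n → ℝ | (∀ j, 0 ≤ v j) ∧ (∑ j, v j) ≤ ε} := by
  obtain ⟨hε0, hε1⟩ := hε
  rintro v ⟨hv0, hvS⟩ v' ⟨hv0', hvS'⟩ hw
  have hw' : ∀ j, v j / (1 + hatv v j) = v' j / (1 + hatv v' j) :=
    fun j => congrFun hw j
  -- the products agree
  have hProdEq : ∀ k, (∏ j ∈ Finset.univ.filter (fun j : Fin n => (j : ℕ) < k),
        ((1 - v j / (1 + hatv v j)) / (1 + v j / (1 + hatv v j))))
      = ∏ j ∈ Finset.univ.filter (fun j : Fin n => (j : ℕ) < k),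
        ((1 - v' j / (1 + hatv v' j)) / (1 + v' j / (1 + hatv v' j))) := by
    intro k
    exact Finset.prod_congr rfl (fun j _ => by rw [hw' j])
  -- set P := full product
  set P : ℝ := ∏ j ∈ Finset.univ.filter (fun j : Fin n => (j : ℕ) < n),
    ((1 - v j / (1 + hatv v j)) / (1 + v j / (1 + hatv v j))) with hP
  have hPpos : 0 < P := by
    apply Finset.prod_pos
    intro j _
    apply div_pos
    · linarith [grushin_w_lt_one hε1 hv0 hvS j]
    · linarith [grushin_w_nonneg hε1 hv0 hvS j]
  -- boundary values
  have hbv : ∀ u : Fin n → ℝ, ccGrushin u n = 2 - ccGrushin u 0 := by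
    intro u
    have h1 : Finset.univ.filter (fun j : Fin n => (j : ℕ) < n) = Finset.univ := by
      ext j; simp [j.isLt]
    have h0 : Finset.univ.filter (fun j : Fin n => (j : ℕ) < 0) = (∅ : Finset (Fin n)) := by
      ext j; simp
    rw [ccGrushin, ccGrushin, h1, h0]
    simp; ring
  have hv_n := grushin_cc_prod hε1 hv0 hvS n le_rfl
  have hv'_n := grushin_cc_prod hε1 hv0' hvS' n le_rfl
  rw [hbv v, ← hP] at hv_n
  rw [hbv v', ← hProdEq n, ← hP] at hv'_n
  -- c₀ agrees
  have hc0 : ccGrushin v 0 = ccGrushin v' 0 := by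
    have h1 : ccGrushin v 0 * (1 + P) = 2 := by linarith [hv_n]
    have h2 : ccGrushin v' 0 * (1 + P) = 2 := by linarith [hv'_n]
    have h3 : (0:ℝ) < 1 + P := by linarith
    have := h1.trans h2.symm
    exact mul_right_cancel₀ (ne_of_gt h3) this
  -- all cₖ agree
  have hck : ∀ k, k ≤ n → ccGrushin v k = ccGrushin v' k := by
    intro k hk
    rw [grushin_cc_prod hε1 hv0 hvS k hk, grushin_cc_prod hε1 hv0' hvS' k hk,
      hc0, hProdEq k]
  -- recover v
  -- recover each coordinate
  have hrec : ∀ (u : Fin n → ℝ), (∀ j, 0 ≤ u j) → (∑ j, u j) ≤ ε → ∀ j : Fin n,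
      u j = (u j / (1 + hatv u j)) * ccGrushin u (j : ℕ)
        / (1 + u j / (1 + hatv u j)) := by
    intro u hu0 huS j
    have hd := grushin_d_pos hε1 hu0 huS j
    have h3 := grushin_hatv_eq u j
    have hcc : ccGrushin u (j : ℕ) = (1 + hatv u j) + u j := by linarith
    have h1w : (0:ℝ) < 1 + u j / (1 + hatv u j) := by
      have := grushin_w_nonneg hε1 hu0 huS j; linarith
    rw [hcc, eq_div_iff (ne_of_gt h1w)]
    field_simp
  funext j
  rw [hrec v hv0 hvS j, hrec v' hv0' hvS' j, hw' j, hck (j : ℕ) j.isLt.le]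
end

section
/- Let $n \ge 1$ and let $\Omega = \{ v \in \mathbb{R}^n : \hat v_j \ne -1 \text{ for all } j \}$, where $\hat v_j = \sum_{r=j+1}^n v_r - \sum_{r=1}^{j-1} v_r$. For $v \in \Omega$ set $w_j = v_j/(1+\hat v_j)$. Then the Jacobian determinant of the map $v \mapsto w$ equals $\left( \prod_{j=1}^n \frac{1}{1+\hat v_j} \right) \sum_{S \subseteq \{1,\dots,n\},\ |S| \text{ even}} \prod_{j \in S} \frac{v_j}{1+\hat v_j}$. -/
open Finset

noncomputable def Bmat (n : ℕ) (w : Fin n → ℝ) : Matrix (Fin n) (Fin n) ℝ :=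
  Matrix.of fun j s => if j = s then 1 else if j < s then -w j else w j

noncomputable def Mmat (n : ℕ) (w : Fin n → ℝ) : Matrix (Fin n) (Fin n) ℝ :=
  Matrix.of fun j s =>
    if (s : ℕ) + 1 = n then (if (j : ℕ) + 1 = n then 1 else -w j)
    else if j = s then 1 + w j
    else if (j : ℕ) = (s : ℕ) + 1 then w j - 1 else 0

noncomputable def Tmat (n : ℕ) : Matrix (Fin n) (Fin n) ℝ :=
  Matrix.of fun j s => if j = s then 1 else if (j : ℕ) = (s : ℕ) + 1 then -1 else 0

lemma Tmat_det (n : ℕ) : (Tmat n).det = 1 := by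
  have ht : (Tmat n).BlockTriangular OrderDual.toDual := by
    intro i j h
    have hij : i < j := h
    have hij' : (i : ℕ) < (j : ℕ) := hij
    simp only [Tmat, Matrix.of_apply]
    rw [if_neg hij.ne, if_neg (by omega)]
  rw [Matrix.det_of_lowerTriangular (Tmat n) ht]
  exact Finset.prod_eq_one fun i _ => by simp [Tmat]

lemma Bmat_mul_Tmat (n : ℕ) (w : Fin n → ℝ) : Bmat n w * Tmat n = Mmat n w := by
  ext j s
  rw [Matrix.mul_apply]
  have hsplit : ∀ k : Fin n, Tmat n k s =
      (if k = s then (1:ℝ) else 0) + (if (k : ℕ) = (s : ℕ) + 1 then -1 else 0) := by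
    intro k
    have hk := k.isLt; have hs := s.isLt
    simp only [Tmat, Matrix.of_apply, Fin.ext_iff]
    split_ifs <;> first | ring1 | (exfalso; omega)
  simp_rw [hsplit, mul_add, Finset.sum_add_distrib]
  have h1 : ∑ k : Fin n, Bmat n w j k * (if k = s then (1:ℝ) else 0) = Bmat n w j s := by
    simp [mul_ite]
  have h2 : ∑ k : Fin n, Bmat n w j k * (if (k : ℕ) = (s : ℕ) + 1 then (-1:ℝ) else 0)
      = if h : (s : ℕ) + 1 < n then -Bmat n w j ⟨(s : ℕ) + 1, h⟩ else 0 := by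
    by_cases h : (s : ℕ) + 1 < n
    · rw [dif_pos h, Finset.sum_eq_single (⟨(s : ℕ) + 1, h⟩ : Fin n)]
      · simp
      · intro k _ hk
        rw [if_neg, mul_zero]
        intro hc; exact hk (Fin.ext hc)
      · simp
    · rw [dif_neg h]
      apply Finset.sum_eq_zero
      intro k _
      rw [if_neg (by omega), mul_zero]
  rw [h1, h2]
  have hjlt := j.isLt
  have hslt := s.isLt
  by_cases hs : (s : ℕ) + 1 < n
  · rw [dif_pos hs]
    simp only [Bmat, Mmat, Matrix.of_apply, Fin.ext_iff, Fin.lt_def]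
    split_ifs <;> first | ring1 | (exfalso; omega)
  · rw [dif_neg hs]
    have hs' : (s : ℕ) + 1 = n := by omega
    simp only [Bmat, Mmat, Matrix.of_apply, Fin.ext_iff, Fin.lt_def]
    split_ifs <;> first | ring1 | (exfalso; omega)

lemma Mmat_det (n : ℕ) (w : Fin n → ℝ) :
    (Mmat n w).det = ((∏ j, (1 + w j)) + ∏ j, (1 - w j)) / 2 := by
  induction n with
  | zero => simp [Matrix.det_isEmpty]
  | succ n ih =>
    rcases Nat.eq_zero_or_pos n with h0 | hpos
    · subst h0
      rw [Matrix.det_fin_one]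
      simp [Mmat]
      try ring
    · rw [Matrix.det_succ_row_zero]
      have hzero : ∀ j : Fin (n + 1), j ≠ 0 → j ≠ Fin.last n →
          (-1 : ℝ) ^ (j : ℕ) * Mmat (n + 1) w 0 j *
            ((Mmat (n + 1) w).submatrix Fin.succ j.succAbove).det = 0 := by
        intro j hj0 hjl
        have h1 : (j : ℕ) + 1 ≠ n + 1 := fun hc => hjl (Fin.ext (by simpa using hc))
        have h2 : (0 : Fin (n+1)) ≠ j := fun hc => hj0 hc.symm
        have h3 : (0 : ℕ) ≠ (j : ℕ) + 1 := by omega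
        simp only [Mmat, Matrix.of_apply, if_neg h1, if_neg h2]
        rw [if_neg (by simpa using h3)]
        try ring
      have h0l : (0 : Fin (n+1)) ≠ Fin.last n := by
        intro hc
        rw [Fin.ext_iff] at hc
        simp [Fin.val_last] at hc
        omega
      rw [← Finset.sum_subset (Finset.subset_univ {0, Fin.last n})
        (fun x _ hx => hzero x (fun h => hx (by simp [h])) (fun h => hx (by simp [h]))),
        Finset.sum_pair h0l]
      -- the two submatrices
      have hsubA : (Mmat (n + 1) w).submatrix Fin.succ ((0 : Fin (n+1)).succAbove)
          = Mmat n (w ∘ Fin.succ) := by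
        ext j s
        simp only [Fin.succAbove_zero, Matrix.submatrix_apply, Mmat, Matrix.of_apply,
          Function.comp_apply, Fin.val_succ, Fin.ext_iff]
        split_ifs <;> first | ring1 | (exfalso; omega)
      have hsubB : ((Mmat (n + 1) w).submatrix Fin.succ ((Fin.last n).succAbove)).det
          = ∏ i : Fin n, (w i.succ - 1) := by
        rw [Matrix.det_of_upperTriangular]
        · apply Finset.prod_congr rfl
          intro i _
          have hi := i.isLt
          simp only [Fin.succAbove_last, Matrix.submatrix_apply, Mmat, Matrix.of_apply,
            Fin.val_succ, Fin.coe_castSucc, Fin.ext_iff]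
          split_ifs <;> first | ring1 | (exfalso; omega)
        · intro i j hij
          have hij' : (j : ℕ) < (i : ℕ) := hij
          have hi := i.isLt
          have hjlt := j.isLt
          simp only [Fin.succAbove_last, Matrix.submatrix_apply, Mmat, Matrix.of_apply,
            Fin.val_succ, Fin.coe_castSucc, Fin.ext_iff]
          split_ifs <;> first | ring1 | (exfalso; omega)
      have hprodneg : ∏ i : Fin n, (w i.succ - 1) = (-1 : ℝ) ^ n * ∏ i : Fin n, (1 - w i.succ) := by
        rw [show (-1 : ℝ) ^ n = ∏ _i : Fin n, (-1 : ℝ) by simp, ← Finset.prod_mul_distrib]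
        exact Finset.prod_congr rfl fun i _ => by ring
      have hM00 : Mmat (n + 1) w 0 0 = 1 + w 0 := by
        simp only [Mmat, Matrix.of_apply, Fin.ext_iff, Fin.val_zero]
        split_ifs <;> first | ring1 | (exfalso; omega)
      have hM0l : Mmat (n + 1) w 0 (Fin.last n) = -w 0 := by
        simp only [Mmat, Matrix.of_apply, Fin.ext_iff, Fin.val_last, Fin.val_zero]
        simp [hpos.ne']
      rw [hsubA, hsubB, hprodneg, hM00, hM0l, ih]
      simp only [Fin.val_zero, pow_zero, Fin.val_last, Function.comp_apply]
      rw [Fin.prod_univ_succ (fun j => 1 + w j), Fin.prod_univ_succ (fun j => 1 - w j)]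
      have hpow : (-1 : ℝ) ^ n * (-1 : ℝ) ^ n = 1 := by
        rw [← pow_add, Even.neg_one_pow ⟨n, rfl⟩]
      linear_combination (-(w 0) * ∏ i : Fin n, (1 - w i.succ)) * hpow

lemma sum_even_prod (n : ℕ) (w : Fin n → ℝ) :
    ∑ S ∈ Finset.univ.filter (fun S : Finset (Fin n) => Even S.card), ∏ j ∈ S, w j
      = ((∏ j, (1 + w j)) + ∏ j, (1 - w j)) / 2 := by
  have h1 : ∏ j, (1 + w j) = ∑ S ∈ (Finset.univ : Finset (Fin n)).powerset, ∏ j ∈ S, w j := by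
    have := Finset.prod_add w (fun _ => (1 : ℝ)) Finset.univ
    simp only [Finset.prod_const_one, mul_one] at this
    rw [← this]
    exact Finset.prod_congr rfl fun j _ => by ring
  have h2 : ∏ j, (1 - w j) = ∑ S ∈ (Finset.univ : Finset (Fin n)).powerset,
      (-1 : ℝ) ^ S.card * ∏ j ∈ S, w j := by
    have := Finset.prod_add (fun j => -w j) (fun _ => (1 : ℝ)) Finset.univ
    simp only [Finset.prod_const_one, mul_one] at this
    have hneg : ∀ S : Finset (Fin n), ∏ j ∈ S, (-w j) = (-1 : ℝ) ^ S.card * ∏ j ∈ S, w j := by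
      intro S
      rw [show ((-1 : ℝ) ^ S.card) = ∏ _j ∈ S, (-1 : ℝ) by simp, ← Finset.prod_mul_distrib]
      exact Finset.prod_congr rfl fun j _ => by ring
    calc ∏ j, (1 - w j) = ∏ j, (-w j + 1) := Finset.prod_congr rfl fun j _ => by ring
      _ = ∑ S ∈ (Finset.univ : Finset (Fin n)).powerset, ∏ j ∈ S, (-w j) := this
      _ = _ := Finset.sum_congr rfl fun S _ => hneg S
  rw [h1, h2, Finset.powerset_univ]
  rw [← Finset.sum_filter_add_sum_filter_not Finset.univ (fun S : Finset (Fin n) => Even S.card)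
      (fun S => ∏ j ∈ S, w j),
    ← Finset.sum_filter_add_sum_filter_not Finset.univ (fun S : Finset (Fin n) => Even S.card)
      (fun S => (-1 : ℝ) ^ S.card * ∏ j ∈ S, w j)]
  have he : ∀ S ∈ Finset.univ.filter (fun S : Finset (Fin n) => Even S.card),
      (-1 : ℝ) ^ S.card * ∏ j ∈ S, w j = ∏ j ∈ S, w j := by
    intro S hS
    rw [Finset.mem_filter] at hS
    rw [hS.2.neg_one_pow, one_mul]
  have ho : ∀ S ∈ Finset.univ.filter (fun S : Finset (Fin n) => ¬ Even S.card),
      (-1 : ℝ) ^ S.card * ∏ j ∈ S, w j = -∏ j ∈ S, w j := by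
    intro S hS
    rw [Finset.mem_filter] at hS
    rw [(Nat.not_even_iff_odd.1 hS.2).neg_one_pow]
    try ring
  rw [Finset.sum_congr rfl he, Finset.sum_congr rfl ho, Finset.sum_neg_distrib]
  ring

noncomputable def hatL (n : ℕ) (j : Fin n) : (Fin n → ℝ) →L[ℝ] ℝ :=
  (∑ r ∈ Finset.univ.filter (fun r => j < r), ContinuousLinearMap.proj r)
    - ∑ r ∈ Finset.univ.filter (fun r => r < j), ContinuousLinearMap.proj r

lemma hatL_apply {n : ℕ} (j : Fin n) (u : Fin n → ℝ) : hatL n j u = hatv u j := by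
  simp [hatL, hatv, ContinuousLinearMap.sum_apply]

lemma hatL_single {n : ℕ} (j s : Fin n) :
    hatL n j (Pi.single s 1) =
      (if j < s then (1:ℝ) else 0) - (if s < j then (1:ℝ) else 0) := by
  have key : ∀ F : Finset (Fin n), ∑ r ∈ F, Pi.single s (1:ℝ) r = if s ∈ F then 1 else 0 := by
    intro F
    rw [Finset.sum_congr rfl (fun r _ => Pi.single_apply s (1:ℝ) r)]
    exact Finset.sum_ite_eq' F s (fun _ => (1:ℝ))
  simp only [hatL, ContinuousLinearMap.sub_apply, ContinuousLinearMap.sum_apply,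
    ContinuousLinearMap.proj_apply]
  rw [key, key]
  simp [Finset.mem_filter]

lemma fderiv_entry {n : ℕ} (v : Fin n → ℝ) (j : Fin n) (hj : hatv v j ≠ -1) (s : Fin n) :
    fderiv ℝ (fun u : Fin n → ℝ => u j / (1 + hatv u j)) v (Pi.single s 1)
      = (1 + hatv v j)⁻¹ *
          (if j = s then 1 else if j < s then -(v j * (1 + hatv v j)⁻¹)
            else v j * (1 + hatv v j)⁻¹) := by
  have hc : (1 + hatv v j) ≠ 0 := by
    intro h; apply hj; linarith
  have hL : HasFDerivAt (fun u : Fin n → ℝ => hatv u j) (hatL n j) v := by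
    have : (fun u : Fin n → ℝ => hatv u j) = ⇑(hatL n j) :=
      funext fun u => (hatL_apply j u).symm
    rw [this]
    exact (hatL n j).hasFDerivAt
  have hg : HasFDerivAt (fun u : Fin n → ℝ => 1 + hatv u j) (hatL n j) v := hL.const_add 1
  have hinvd : HasFDerivAt (fun u : Fin n → ℝ => (1 + hatv u j)⁻¹)
      ((-ContinuousLinearMap.mulLeftRight ℝ ℝ (1 + hatv v j)⁻¹ (1 + hatv v j)⁻¹).comp
        (hatL n j)) v :=
    (hasFDerivAt_inv' hc).comp v hg
  have hproj : HasFDerivAt (fun u : Fin n → ℝ => u j)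
      (ContinuousLinearMap.proj j : (Fin n → ℝ) →L[ℝ] ℝ) v := by
    have : (fun u : Fin n → ℝ => u j)
        = ⇑(ContinuousLinearMap.proj j : (Fin n → ℝ) →L[ℝ] ℝ) := rfl
    rw [this]
    exact (ContinuousLinearMap.proj j : (Fin n → ℝ) →L[ℝ] ℝ).hasFDerivAt
  have hmul := hproj.mul hinvd
  have hfun : (fun u : Fin n → ℝ => u j / (1 + hatv u j))
      = fun u : Fin n → ℝ => u j * (1 + hatv u j)⁻¹ :=
    funext fun u => div_eq_mul_inv _ _
  rw [hfun, show (fun u : Fin n → ℝ => u j * (1 + hatv u j)⁻¹) = ((fun u : Fin n → ℝ => u j) * fun u => (1 + hatv u j)⁻¹) from rfl, hmul.fderiv]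
  simp only [ContinuousLinearMap.add_apply, ContinuousLinearMap.smul_apply,
    ContinuousLinearMap.comp_apply, ContinuousLinearMap.neg_apply,
    ContinuousLinearMap.mulLeftRight_apply, ContinuousLinearMap.proj_apply,
    hatL_single, smul_eq_mul]
  rcases lt_trichotomy j s with h | h | h
  · rw [if_pos h, if_neg (asymm h), if_neg h.ne, if_pos h,
      Pi.single_apply, if_neg h.ne]
    field_simp
    try ring
  · subst h
    rw [if_neg (lt_irrefl j), if_neg (lt_irrefl j), if_pos rfl, Pi.single_apply, if_pos rfl]
    field_simp
    ring
  · rw [if_neg (asymm h), if_pos h, if_neg h.ne', if_neg (asymm h),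
      Pi.single_apply, if_neg h.ne']
    field_simp
    try ring

/-- On `Ω = {v : v̂ⱼ ≠ -1 ∀ j}`, the Jacobian determinant of the map
`v ↦ w`, `wⱼ = vⱼ/(1 + v̂ⱼ)`, equals
`(∏ⱼ 1/(1+v̂ⱼ)) · ∑_{S ⊆ {1,…,n}, |S| even} ∏_{j∈S} vⱼ/(1+v̂ⱼ)`. -/
theorem jacobian_det_grushin_change_of_variables (n : ℕ) (hn : 1 ≤ n)
    (v : Fin n → ℝ) (hv : ∀ j, hatv v j ≠ -1) :
    (Matrix.of fun j s : Fin n =>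
        fderiv ℝ (fun u : Fin n → ℝ => u j / (1 + hatv u j)) v (Pi.single s 1)).det
      = (∏ j, (1 + hatv v j)⁻¹)
        * ∑ S ∈ Finset.univ.filter (fun S : Finset (Fin n) => Even S.card),
            ∏ j ∈ S, v j / (1 + hatv v j) := by
  set w : Fin n → ℝ := fun j => v j * (1 + hatv v j)⁻¹ with hw
  have hmat : (Matrix.of fun j s : Fin n =>
      fderiv ℝ (fun u : Fin n → ℝ => u j / (1 + hatv u j)) v (Pi.single s 1))
      = Matrix.of fun j s : Fin n => (1 + hatv v j)⁻¹ * Bmat n w j s := by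
    ext j s
    rw [Matrix.of_apply, Matrix.of_apply, fderiv_entry v j (hv j) s]
    simp [Bmat, hw]
  rw [hmat, Matrix.det_mul_column]
  have hdet : (Bmat n w).det = (Mmat n w).det := by
    rw [← Bmat_mul_Tmat n w, Matrix.det_mul, Tmat_det, mul_one]
  rw [hdet, Mmat_det, ← sum_even_prod]
  congr 1
end
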